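/- Let x ≥ 2 be even. For every integer s ≥ 1, the multiset {1^{x+2s−2}, x^{2sx−2s}} (consisting of x+2s−2 copies of 1 and 2sx−2s copies of x) has a perfect linear realization, and the multiset {1^{x+2s−1}, x^{2sx−2s+2}} (consisting of x+2s−1 copies of 1 and 2sx−2s+2 copies of x) has a perfect linear realization. -/

import Mathlib

/-!
Write the vertices as `c + r * x` with `c < x`: a grid with `x` columns in which steps of
length `1` and `x` are moves along a row and along a column. For the first multiset
(`x = 2t + 2`, rows `0, …, 2s`, the last cell missing) the path snakes up and down through the
columns `0, …, 2t - 1` and then zigzags up the last two columns, alternating steps `1` and `x`,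
to the top cell of column `2t`, which is `v - 1`. For the second multiset (rows `0, …, 2s` and
the two cells `(2s+1)x`, `(2s+1)x + 1`) the path climbs column `0`, steps to the top of
column `x - 1`, snakes down through the columns `x - 1, …, 3`, steps to `2`, `1` and zigzags up
the columns `1, 2`; for `x = 2` the blocks `4j, 4j + 2, 4j + 1, 4j + 3` do instead.
-/

/-- The multiset of absolute differences of consecutive entries of a list of naturals. -/
def linDiffs (l : List ℕ) : Multiset ℕ :=
  ↑(List.zipWith (fun a b => (a - b) + (b - a)) l l.tail)

/-- `l` is a linear realization of the multiset `L`: it lists `0, …, |L|`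
(each exactly once) and its consecutive absolute differences form `L`. -/
def IsLinearRealization (L : Multiset ℕ) (l : List ℕ) : Prop :=
  l.Perm (List.range (Multiset.card L + 1)) ∧ linDiffs l = L

def HasLinearRealization (L : Multiset ℕ) : Prop :=
  ∃ l : List ℕ, IsLinearRealization L l

/-- A standard linear realization starts at `0`. -/
def HasStandardLinearRealization (L : Multiset ℕ) : Prop :=
  ∃ l : List ℕ, IsLinearRealization L l ∧ l.head? = some 0

/-- A perfect linear realization starts at `0` and ends at `v - 1 = |L|`. -/
def HasPerfectLinearRealization (L : Multiset ℕ) : Prop :=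
  ∃ l : List ℕ, IsLinearRealization L l ∧ l.head? = some 0 ∧
    l.getLast? = some (Multiset.card L)

/-- The multiset of cyclic edge-lengths `min(|gᵢ₊₁ - gᵢ|, v - |gᵢ₊₁ - gᵢ|)`
of consecutive entries of a list of naturals. -/
def cycDiffs (v : ℕ) (l : List ℕ) : Multiset ℕ :=
  ↑(List.zipWith (fun a b => min ((a - b) + (b - a)) (v - ((a - b) + (b - a)))) l l.tail)

/-- `L` is (cyclically) realizable in `K_v`: some Hamiltonian path on the vertex
set `{0, …, v-1}` has `L` as its multiset of edge-lengths. -/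
def IsRealizable (v : ℕ) (L : Multiset ℕ) : Prop :=
  ∃ l : List ℕ, l.Perm (List.range v) ∧ cycDiffs v l = L

/-- The multiset `{1^a, x^b, y^c}`. -/
def mset3 (a b c x y : ℕ) : Multiset ℕ :=
  Multiset.replicate a 1 + Multiset.replicate b x + Multiset.replicate c y

/-- With `b = q'x + r'`, `0 ≤ r' < x`: `ω(x,b) = x - 1` if `q' = 0`, `r' = 1`,
or at least one of `x`, `r'` is even; otherwise `ω(x,b) = x`. -/
def omegaBHR (x b : ℕ) : ℕ :=
  if b / x = 0 ∨ b % x = 1 ∨ Even x ∨ Even (b % x) then x - 1 else x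

/-- The reduced form `ĝ = min(g, v - g)`. -/
def reducedForm (v g : ℕ) : ℕ := min g (v - g)

/-- The function `f` of Theorem 3.7 (counterexample characterization refined). -/
def fBHR (u w : ℕ) : ℕ :=
  if Even u ∧ Even w then w - 1
  else if u = 3 ∨ (Even u ∧ ¬ Even w) then u + w - 2
  else u + w - 1

/-- A multiset `L` of size `v - 1` with elements in `{1, …, ⌊v/2⌋}` is admissible
if for every divisor `d` of `v` the number of elements of `L` divisible by `d`
is at most `v - d`. -/
def IsAdmissible (v : ℕ) (L : Multiset ℕ) : Prop :=
  Multiset.card L = v - 1 ∧ (∀ z ∈ L, 1 ≤ z ∧ z ≤ v / 2) ∧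
  ∀ d : ℕ, d ∣ v → Multiset.card (L.filter (fun z => d ∣ z)) ≤ v - d

namespace List

def translates (B : List ℕ) (p k : ℕ) : List ℕ :=
  (range k).flatMap fun j => B.map (· + j * p)

variable (B : List ℕ) (p : ℕ)

@[simp] lemma translates_zero : translates B p 0 = [] := rfl

lemma translates_succ (k : ℕ) :
    translates B p (k + 1) = translates B p k ++ B.map (· + k * p) := by
  simp [translates, range_succ]

lemma map_translates (d k : ℕ) :
    (translates B p k).map (· + d) = translates (B.map (· + d)) p k := by
  simp [translates, map_flatMap, Function.comp_def, Nat.add_right_comm]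

lemma translates_add (k m : ℕ) :
    translates B p (k + m) = translates B p k ++ translates (B.map (· + k * p)) p m := by
  induction m with
  | zero => simp
  | succ m ih =>
    rw [← Nat.add_assoc, translates_succ, ih, translates_succ, map_map, append_assoc]
    congr 3
    funext b
    simp only [Function.comp_apply]
    ring

lemma translates_translates (m k : ℕ) :
    translates (translates B p m) (m * p) k = translates B p (k * m) := by
  induction k with
  | zero => simp
  | succ k ih =>
    rw [translates_succ, ih, Nat.succ_mul, translates_add, map_translates, Nat.mul_assoc]

lemma translates_range' (c m k : ℕ) : translates (range' c m) m k = range' c (k * m) := by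
  induction k with
  | zero => simp
  | succ k ih =>
    rw [translates_succ, ih, Nat.succ_mul, ← range'_append_1]
    simp only [Nat.add_comm _ (k * m), map_add_range']

lemma coe_translates (k : ℕ) :
    (translates B p k : Multiset ℕ) =
      ∑ j ∈ Finset.range k, (B : Multiset ℕ).map (· + j * p) := by
  induction k with
  | zero => simp
  | succ k ih =>
    rw [translates_succ, ← Multiset.coe_add, ih, Finset.sum_range_succ, Multiset.map_coe]

lemma coe_translates_append (B' : List ℕ) (k : ℕ) :
    (translates (B ++ B') p k : Multiset ℕ) = translates B p k + translates B' p k := by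
  simp only [coe_translates, ← Multiset.coe_add, Multiset.map_add, Finset.sum_add_distrib]

lemma coe_translates_comm (q m k : ℕ) :
    (translates (translates B p m) q k : Multiset ℕ) = translates (translates B q k) p m := by
  simp only [coe_translates, ← Multiset.coe_mapAddMonoidHom, map_sum]
  simp only [Multiset.coe_mapAddMonoidHom, Multiset.map_map, Function.comp_def]
  rw [Finset.sum_comm]
  simp only [Nat.add_right_comm]

end List

open List

lemma Nat.dist_self_add (a d : ℕ) : Nat.dist a (a + d) = d := by
  rw [Nat.dist_eq_sub_of_le (Nat.le_add_right a d), Nat.add_sub_cancel_left]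

lemma Multiset.eq_range_of_add_singleton {M : Multiset ℕ} {N : ℕ}
    (h : M + {N} = Multiset.range (N + 1)) : M = Multiset.range N := by
  rw [Multiset.range_succ, ← Multiset.singleton_add, add_comm] at h
  exact add_left_cancel h

lemma linDiffs_cons_cons (a b : ℕ) (l : List ℕ) :
    linDiffs (a :: b :: l) = Nat.dist a b ::ₘ linDiffs (b :: l) := rfl

lemma linDiffs_singleton (a : ℕ) : linDiffs [a] = 0 := rfl

lemma linDiffs_append {l₁ l₂ : List ℕ} {a b : ℕ} (h₁ : l₁.getLast? = some a)
    (h₂ : l₂.head? = some b) :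
    linDiffs (l₁ ++ l₂) = linDiffs l₁ + Nat.dist a b ::ₘ linDiffs l₂ := by
  obtain ⟨l₂, rfl⟩ : ∃ m, l₂ = b :: m := by
    cases l₂ with
    | nil => simp at h₂
    | cons c m => simp_all
  induction l₁ with
  | nil => simp at h₁
  | cons c l ih =>
    cases l with
    | nil => simp_all [linDiffs_cons_cons]; rfl
    | cons d l =>
      rw [getLast?_cons_cons] at h₁
      simp only [cons_append, linDiffs_cons_cons] at ih ⊢
      rw [ih h₁, Multiset.cons_add]

lemma linDiffs_map_add (l : List ℕ) (d : ℕ) : linDiffs (l.map (· + d)) = linDiffs l := by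
  induction l with
  | nil => rfl
  | cons a l ih =>
    cases l with
    | nil => rfl
    | cons b l =>
      simp only [map_cons, linDiffs_cons_cons, Nat.dist_add_add_right] at ih ⊢
      rw [ih]

lemma linDiffs_reverse (l : List ℕ) : linDiffs l.reverse = linDiffs l := by
  induction l with
  | nil => rfl
  | cons a l ih =>
    cases l with
    | nil => rfl
    | cons b l =>
      rw [reverse_cons, linDiffs_append (a := b) (b := a) (by simp) rfl, ih, linDiffs_cons_cons,
        Nat.dist_comm, linDiffs_singleton, Multiset.add_cons, add_zero]

lemma hasPerfectLinearRealization_linDiffs {l : List ℕ} {N : ℕ}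
    (hl : (l : Multiset ℕ) = Multiset.range (N + 1)) (h0 : l.head? = some 0)
    (hN : l.getLast? = some N) : HasPerfectLinearRealization (linDiffs l) := by
  have hlen : l.length = N + 1 := by simpa using congrArg Multiset.card hl
  have hcard : Multiset.card (linDiffs l) = N := by simp [linDiffs, hlen]
  exact ⟨l, ⟨by rw [hcard]; exact Multiset.coe_eq_coe.mp hl, rfl⟩, h0, hcard ▸ hN⟩

section translates

variable {B : List ℕ} {p a b : ℕ}

lemma head?_translates (ha : B.head? = some a) (k : ℕ) :
    (translates B p (k + 1)).head? = some a := by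
  rw [← Nat.add_comm 1, translates_add]
  cases B with
  | nil => simp at ha
  | cons c B => simp_all [translates]

lemma head?_translates_append (ha : B.head? = some a) {l : List ℕ} {k : ℕ}
    (hl : l.head? = some (a + k * p)) : (translates B p k ++ l).head? = some a := by
  cases k with
  | zero => simpa using hl
  | succ k => simp [head?_translates ha]

lemma getLast?_translates (hb : B.getLast? = some b) (k : ℕ) :
    (translates B p (k + 1)).getLast? = some (b + k * p) := by
  simp [translates_succ, getLast?_append, getLast?_map, hb]

lemma linDiffs_translates_append (ha : B.head? = some a) (hb : B.getLast? = some b)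
    (k : ℕ) {l : List ℕ} (hl : l.head? = some (a + k * p)) :
    linDiffs (translates B p k ++ l) =
      k • (Nat.dist b (a + p) ::ₘ linDiffs B) + linDiffs l := by
  induction k generalizing l with
  | zero => simp
  | succ k ih =>
    have hB : (B.map (· + k * p) ++ l).head? = some (a + k * p) := by
      cases B with
      | nil => simp at ha
      | cons c B => simp_all
    rw [translates_succ, append_assoc, ih hB,
      linDiffs_append (a := b + k * p) (by simp [getLast?_map, hb]) hl, linDiffs_map_add,
      show a + (k + 1) * p = (a + p) + k * p by ring, Nat.dist_add_add_right, succ_nsmul,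
      Multiset.add_cons, add_assoc, Multiset.cons_add]

lemma linDiffs_translates (ha : B.head? = some a) (hb : B.getLast? = some b) (k : ℕ) :
    linDiffs (translates B p (k + 1)) =
      k • (Nat.dist b (a + p) ::ₘ linDiffs B) + linDiffs B := by
  rw [translates_succ, linDiffs_translates_append ha hb k (by simp [ha]), linDiffs_map_add]

@[simp] lemma head?_translates_singleton (c k : ℕ) :
    (translates [c] p (k + 1)).head? = some c :=
  head?_translates rfl k

@[simp] lemma getLast?_translates_singleton (c k : ℕ) :
    (translates [c] p (k + 1)).getLast? = some (c + k * p) :=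
  getLast?_translates rfl k

lemma linDiffs_translates_singleton (c k : ℕ) :
    linDiffs (translates [c] p (k + 1)) = Multiset.replicate k p := by
  rw [linDiffs_translates rfl rfl, linDiffs_singleton, getLast_singleton, Nat.dist_self_add,
    add_zero]
  exact Multiset.nsmul_singleton p k

end translates

-- Up column `c`, down column `c + 1`, up column `c + 2`, …: `2 * k` columns of height `n`.
def snake (x n c k : ℕ) : List ℕ :=
  translates (translates [c] x n ++ (translates [c + 1] x n).reverse) 2 k

section snake

variable (x m c k : ℕ)

lemma coe_snake : (snake x m c k : Multiset ℕ) = translates (range' c (2 * k)) x m := by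
  rw [snake, coe_translates, ← Multiset.coe_add, Multiset.coe_reverse, ← coe_translates_append,
    ← coe_translates, coe_translates_comm, show [c] ++ [c + 1] = range' c 2 from rfl,
    translates_range', Nat.mul_comm]

lemma head?_snake_append {l : List ℕ} (hl : l.head? = some (c + 2 * k)) :
    (snake x (m + 1) c k ++ l).head? = some c :=
  head?_translates_append (by simp) (by rwa [Nat.mul_comm])

lemma linDiffs_snake_append {l : List ℕ} (hl : l.head? = some (c + 2 * k)) :
    linDiffs (snake x (m + 1) c k ++ l) =
      k • (1 ::ₘ (Multiset.replicate m x + 1 ::ₘ Multiset.replicate m x)) + linDiffs l := by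
  have hturn : Nat.dist (c + m * x) (c + 1 + m * x) = 1 := by
    rw [Nat.add_right_comm]
    exact Nat.dist_self_add _ 1
  rw [snake, linDiffs_translates_append (a := c) (b := c + 1) (by simp) (by simp) k
      (by rwa [Nat.mul_comm]),
    linDiffs_append (a := c + m * x) (b := c + 1 + m * x) (by simp) (by simp), linDiffs_reverse,
    linDiffs_translates_singleton, linDiffs_translates_singleton, hturn,
    Nat.dist_self_add (c + 1) 1]

end snake

-- `c, c + 1, c + 1 + x, c + x, c + 2x, …`: column `c` up to row `2k`, column `c + 1` up to
-- row `2k - 1`.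
def zigzag (x c k : ℕ) : List ℕ :=
  translates [c, c + 1, c + 1 + x, c + x] (2 * x) k ++ [c + k * (2 * x)]

section zigzag

variable (x c k : ℕ)

lemma coe_zigzag : (zigzag x c k : Multiset ℕ) + {c + 1 + k * (2 * x)} =
    translates [c, c + 1] x (2 * k + 1) := by
  have hblock : ([c, c + 1, c + 1 + x, c + x] : Multiset ℕ) = translates [c, c + 1] x 2 := by
    simp only [Multiset.coe_eq_coe, translates, range_succ]
    simp [Nat.add_right_comm c 1 x, Perm.swap]
  rw [zigzag, Nat.mul_comm 2 k, translates_succ, ← translates_translates, ← Multiset.coe_add,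
    ← Multiset.coe_add, coe_translates _ (2 * x), hblock, ← coe_translates, add_assoc]
  congr 1
  simp [Nat.mul_assoc]
  rfl

lemma head?_zigzag : (zigzag x c k).head? = some c :=
  head?_translates_append rfl rfl

@[simp] lemma getLast?_zigzag : (zigzag x c k).getLast? = some (c + k * (2 * x)) := by
  simp [zigzag]

lemma linDiffs_zigzag : linDiffs (zigzag x c k) = k • (x ::ₘ 1 ::ₘ x ::ₘ {1}) := by
  rw [zigzag, linDiffs_translates_append (b := c + x) rfl rfl k rfl, linDiffs_singleton, add_zero]
  simp only [linDiffs_cons_cons, linDiffs_singleton]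
  rw [Nat.dist_self_add c 1, show c + 2 * x = c + x + x by ring, Nat.dist_self_add,
    Nat.dist_self_add (c + 1) x, Nat.dist_comm, Nat.add_right_comm c 1 x, Nat.dist_self_add]
  rfl

end zigzag

def firstFamilyPath (x t s : ℕ) : List ℕ :=
  snake x (2 * s + 1) 0 t ++ zigzag x (2 * t) s

lemma coe_firstFamilyPath {x t : ℕ} (hxt : x = 2 * t + 2) (s : ℕ) :
    (firstFamilyPath x t s : Multiset ℕ) + {2 * t + s * (2 * x) + 1} =
      Multiset.range (2 * t + s * (2 * x) + 1 + 1) := by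
  have hcols : range' 0 (2 * t) ++ [2 * t, 2 * t + 1] = range' 0 x := by
    rw [hxt, ← range'_append_1, Nat.zero_add]
    rfl
  rw [firstFamilyPath, ← Multiset.coe_add, add_assoc, Nat.add_right_comm _ _ 1, coe_zigzag,
    coe_snake, ← coe_translates_append, hcols, translates_range', Multiset.range,
    range_eq_range']
  congr 2
  rw [hxt]
  ring

lemma linDiffs_firstFamilyPath {x t : ℕ} (hxt : x = 2 * t + 2) (s : ℕ) :
    linDiffs (firstFamilyPath x t s) =
      Multiset.replicate (x + 2 * s - 2) 1 + Multiset.replicate (2 * s * x - 2 * s) x := by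
  rw [firstFamilyPath, linDiffs_snake_append _ _ _ _ (by simp [head?_zigzag]), linDiffs_zigzag]
  ext y
  simp only [Multiset.count_add, Multiset.count_cons, Multiset.count_nsmul,
    Multiset.count_replicate, Multiset.count_singleton]
  split_ifs <;> subst_vars <;> ring_nf <;> omega

theorem hasPerfectLinearRealization_first (x s : ℕ) (hx : 2 ≤ x) (hxe : Even x) :
    HasPerfectLinearRealization
      (Multiset.replicate (x + 2 * s - 2) 1 + Multiset.replicate (2 * s * x - 2 * s) x) := by
  obtain ⟨t, hxt⟩ : ∃ t, x = 2 * t + 2 := by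
    obtain ⟨m, rfl⟩ := hxe
    exact ⟨m - 1, by omega⟩
  rw [← linDiffs_firstFamilyPath hxt]
  exact hasPerfectLinearRealization_linDiffs
    (Multiset.eq_range_of_add_singleton (coe_firstFamilyPath hxt s))
    (head?_snake_append _ _ _ _ (by simp [head?_zigzag])) (by simp [firstFamilyPath])

def secondFamilyPath (x u s : ℕ) : List ℕ :=
  translates [0] x (2 * s + 2) ++
    (snake x (2 * s + 1) 3 u ++ translates [3 + 2 * u] x (2 * s + 1)).reverse ++ [2, 1] ++
    zigzag x (1 + x) s

lemma coe_secondFamilyPath {x u : ℕ} (hxu : x = 2 * u + 4) (s : ℕ) :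
    (secondFamilyPath x u s : Multiset ℕ) + {1 + x + s * (2 * x) + 1} =
      Multiset.range (1 + x + s * (2 * x) + 1 + 1) := by
  have hsnake : (↑(snake x (2 * s + 1) 3 u ++ translates [3 + 2 * u] x (2 * s + 1)) :
      Multiset ℕ) = translates (range' 3 (2 * u + 1)) x (2 * s + 1) := by
    rw [← Multiset.coe_add, coe_snake, ← coe_translates_append, ← range'_1_concat]
  have hzigzag : ([2, 1] : Multiset ℕ) + zigzag x (1 + x) s + {1 + x + s * (2 * x) + 1} =
      translates [1, 2] x (2 * s + 2) := by
    rw [add_assoc, show 1 + x + s * (2 * x) + 1 = 1 + x + 1 + s * (2 * x) by ring, coe_zigzag,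
      show 2 * s + 2 = 1 + (2 * s + 1) by ring, translates_add [1, 2] x 1,
      show translates [1, 2] x 1 = [1, 2] by simp [translates],
      show [1, 2].map (· + 1 * x) = [1 + x, 1 + x + 1] by simp; omega, ← Multiset.coe_add]
    exact Multiset.coe_eq_coe.mpr ((Perm.swap 1 2 []).append_right _)
  have hcols : [0] ++ [1, 2] ++ range' 3 (2 * u + 1) = range' 0 x := by
    rw [hxu]
    rfl
  calc (secondFamilyPath x u s : Multiset ℕ) + {1 + x + s * (2 * x) + 1}
      = (translates [0] x (2 * s + 2) : Multiset ℕ) +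
          ↑(snake x (2 * s + 1) 3 u ++ translates [3 + 2 * u] x (2 * s + 1)) +
          (([2, 1] : Multiset ℕ) + zigzag x (1 + x) s + {1 + x + s * (2 * x) + 1}) := by
        simp only [secondFamilyPath, ← Multiset.coe_add, Multiset.coe_reverse, add_assoc]
    _ = (translates ([0] ++ [1, 2]) x (2 * s + 2) : Multiset ℕ) +
          translates (range' 3 (2 * u + 1)) x (2 * s + 1) := by
        rw [hsnake, hzigzag, coe_translates_append]
        abel
    _ = (translates ([0] ++ [1, 2] ++ range' 3 (2 * u + 1)) x (2 * s + 1) : Multiset ℕ) +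
          (([0] ++ [1, 2]).map (· + (2 * s + 1) * x) : List ℕ) := by
        rw [translates_succ, ← Multiset.coe_add, coe_translates_append ([0] ++ [1, 2])]
        abel
    _ = _ := by
        rw [hcols, translates_range', Multiset.range, range_eq_range',
          show 1 + x + s * (2 * x) + 1 + 1 = (2 * s + 1) * x + 3 by ring, ← range'_append_1,
          ← Multiset.coe_add]
        congr 2
        simp [range']
        omega

lemma linDiffs_secondFamilyPath {x u : ℕ} (hxu : x = 2 * u + 4) (s : ℕ) :
    linDiffs (secondFamilyPath x u s) =
      Multiset.replicate (x + 2 * s - 1) 1 + Multiset.replicate (2 * s * x - 2 * s + 2) x := by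
  rw [secondFamilyPath]
  set snakeUp := snake x (2 * s + 1) 3 u ++ translates [3 + 2 * u] x (2 * s + 1)
  have hhead : snakeUp.head? = some 3 := head?_snake_append _ _ _ _ (by simp)
  have hlast : snakeUp.getLast? = some (3 + 2 * u + 2 * s * x) := by simp [snakeUp]
  have hturn : Nat.dist ((2 * s + 1) * x) (3 + 2 * u + 2 * s * x) = 1 := by
    rw [Nat.dist_comm, show (2 * s + 1) * x = 3 + 2 * u + 2 * s * x + 1 by rw [hxu]; ring]
    exact Nat.dist_self_add _ 1
  rw [linDiffs_append (a := 1) (b := 1 + x) (by simp) (head?_zigzag _ _ _),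
    linDiffs_append (a := 3) (b := 2) (by simp [hhead]) rfl,
    linDiffs_append (a := (2 * s + 1) * x) (b := 3 + 2 * u + 2 * s * x) (by simp)
      (by simp [hlast]),
    linDiffs_reverse, linDiffs_snake_append _ _ _ _ (by simp), linDiffs_translates_singleton,
    linDiffs_translates_singleton, linDiffs_zigzag, hturn, Nat.dist_self_add,
    show Nat.dist 3 2 = 1 from rfl, show linDiffs [2, 1] = {1} from rfl]
  ext y
  simp only [Multiset.count_add, Multiset.count_cons, Multiset.count_nsmul,
    Multiset.count_replicate, Multiset.count_singleton]
  split_ifs <;> subst_vars <;> ring_nf <;> omega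

theorem hasPerfectLinearRealization_second_of_two (s : ℕ) :
    HasPerfectLinearRealization
      (Multiset.replicate (2 + 2 * s - 1) 1 + Multiset.replicate (2 * s * 2 - 2 * s + 2) 2) := by
  have hdiffs : linDiffs (translates [0, 2, 1, 3] 4 (s + 1)) =
      Multiset.replicate (2 + 2 * s - 1) 1 + Multiset.replicate (2 * s * 2 - 2 * s + 2) 2 := by
    rw [linDiffs_translates (a := 0) (b := 3) rfl rfl,
      show linDiffs [0, 2, 1, 3] = {2, 1, 2} from rfl, show Nat.dist 3 (0 + 4) = 1 from rfl]
    ext y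
    simp only [Multiset.count_add, Multiset.count_cons, Multiset.count_nsmul,
      Multiset.count_replicate, Multiset.insert_eq_cons, Multiset.count_singleton]
    split_ifs <;> subst_vars <;> omega
  have hverts : (translates [0, 2, 1, 3] 4 (s + 1) : Multiset ℕ) =
      Multiset.range (3 + s * 4 + 1) := by
    rw [coe_translates, show ([0, 2, 1, 3] : Multiset ℕ) = range' 0 4 from
      Multiset.coe_eq_coe.mpr (by decide), ← coe_translates, translates_range', Multiset.range,
      range_eq_range']
    congr 2
    ring
  rw [← hdiffs]
  exact hasPerfectLinearRealization_linDiffs hverts (head?_translates rfl s)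
    (getLast?_translates rfl s)

theorem hasPerfectLinearRealization_second (x s : ℕ) (hx : 2 ≤ x) (hxe : Even x) :
    HasPerfectLinearRealization
      (Multiset.replicate (x + 2 * s - 1) 1 + Multiset.replicate (2 * s * x - 2 * s + 2) x) := by
  obtain ⟨m, rfl⟩ := hxe
  obtain rfl | ⟨u, rfl⟩ : m = 1 ∨ ∃ u, m = u + 2 := by
    rcases m with _ | _ | u <;> simp_all
  · exact hasPerfectLinearRealization_second_of_two s
  · have hxu : u + 2 + (u + 2) = 2 * u + 4 := by ring
    rw [← linDiffs_secondFamilyPath hxu]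
    exact hasPerfectLinearRealization_linDiffs
      (Multiset.eq_range_of_add_singleton (coe_secondFamilyPath hxu s)) (by simp [secondFamilyPath])
      (by rw [secondFamilyPath, getLast?_append, getLast?_zigzag]; rfl)

theorem stmt13_general (x : ℕ) (hx : 2 ≤ x) (hxe : Even x) (s : ℕ) :
    HasPerfectLinearRealization
      (Multiset.replicate (x + 2 * s - 2) 1 +
        Multiset.replicate (2 * s * x - 2 * s) x) ∧
    HasPerfectLinearRealization
      (Multiset.replicate (x + 2 * s - 1) 1 +
        Multiset.replicate (2 * s * x - 2 * s + 2) x) :=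
  ⟨hasPerfectLinearRealization_first x s hx hxe, hasPerfectLinearRealization_second x s hx hxe⟩

/-- Let `x ≥ 2` be even. For every `s ≥ 1`, the multisets
`{1^{x+2s-2}, x^{2sx-2s}}` and `{1^{x+2s-1}, x^{2sx-2s+2}}` have perfect linear
realizations. -/
theorem stmt13 (x : ℕ) (hx : 2 ≤ x) (hxe : Even x) (s : ℕ) (hs : 1 ≤ s) :
    HasPerfectLinearRealization
      (Multiset.replicate (x + 2 * s - 2) 1 +
        Multiset.replicate (2 * s * x - 2 * s) x) ∧
    HasPerfectLinearRealization
      (Multiset.replicate (x + 2 * s - 1) 1 +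
        Multiset.replicate (2 * s * x - 2 * s + 2) x) :=
  stmt13_general x hx hxe s
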